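/- Let b>0, r>0, x_R∈(0,b). Define T(x) = (sinh(b√(2r)) − sinh(x√(2r)) − sinh((b−x)√(2r))) / (r·(sinh(x_R√(2r)) + sinh((b−x_R)√(2r)))) for x∈[0,b]. Then T satisfies (1/2)T''(x) − r·T(x) + r·T(x_R) = −1 for all x∈(0,b), with T(0)=T(b)=0. -/

import Mathlib

/-!
Write `s = √(2r)` and `f x = sinh (x s) + sinh ((b - x) s)`, so that `T = (sinh (b s) - f) / (r f x_R)`.
Since `f'' = s² f = 2 r f`, the terms `½ T''` and `-r T` cancel up to the constant `r sinh (b s) / (r f x_R)`,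
which `r T x_R` turns into `-r f x_R / (r f x_R) = -1`. The boundary values hold because `f 0 = f b = sinh (b s)`.
-/

open Real

section SinhProfile

variable (s b : ℝ)

theorem hasDerivAt_sinh_mul_add_sinh_sub_mul (x : ℝ) :
    HasDerivAt (fun x => sinh (x * s) + sinh ((b - x) * s))
      (s * (cosh (x * s) - cosh ((b - x) * s))) x :=
  (((hasDerivAt_mul_const s).sinh.fun_add
    (((hasDerivAt_id' x).const_sub b).mul_const s).sinh)).congr_deriv (by ring)

theorem hasDerivAt_cosh_mul_sub_cosh_sub_mul (x : ℝ) :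
    HasDerivAt (fun x => s * (cosh (x * s) - cosh ((b - x) * s)))
      (s ^ 2 * (sinh (x * s) + sinh ((b - x) * s))) x :=
  (((hasDerivAt_mul_const s).cosh.fun_sub
    (((hasDerivAt_id' x).const_sub b).mul_const s).cosh).const_mul s).congr_deriv (by ring)

theorem deriv_deriv_sinh_mul_add_sinh_sub_mul :
    deriv (deriv fun x => sinh (x * s) + sinh ((b - x) * s)) =
      fun x => s ^ 2 * (sinh (x * s) + sinh ((b - x) * s)) := by
  have h : deriv (fun x => sinh (x * s) + sinh ((b - x) * s)) =
      fun x => s * (cosh (x * s) - cosh ((b - x) * s)) :=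
    funext fun x => (hasDerivAt_sinh_mul_add_sinh_sub_mul s b x).deriv
  rw [h]
  exact funext fun x => (hasDerivAt_cosh_mul_sub_cosh_sub_mul s b x).deriv

end SinhProfile

theorem deriv_deriv_const_sub_div {𝕜 : Type*} [NontriviallyNormedField 𝕜] (f : 𝕜 → 𝕜) (c d : 𝕜) :
    deriv (deriv fun x => (c - f x) / d) = fun x => -deriv (deriv f) x / d := by
  have h : deriv (fun x => (c - f x) / d) = fun x => -deriv f x / d := by
    funext x
    rw [deriv_div_const, deriv_const_sub]
  rw [h]
  funext x
  rw [deriv_div_const, deriv.fun_neg]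

theorem stmt8_general (b r x_R : ℝ) (hr : 0 < r) (hxR : x_R ∈ Set.Ioo 0 b)
    (T : ℝ → ℝ)
    (hT : ∀ x, T x =
      (Real.sinh (b * Real.sqrt (2 * r)) - Real.sinh (x * Real.sqrt (2 * r)) -
        Real.sinh ((b - x) * Real.sqrt (2 * r))) /
      (r * (Real.sinh (x_R * Real.sqrt (2 * r)) + Real.sinh ((b - x_R) * Real.sqrt (2 * r))))) :
    (∀ x ∈ Set.Ioo 0 b,
      (1 / 2) * deriv (deriv T) x - r * T x + r * T x_R = -1) ∧
    T 0 = 0 ∧ T b = 0 := by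
  set s := Real.sqrt (2 * r)
  set f : ℝ → ℝ := fun x => sinh (x * s) + sinh ((b - x) * s)
  have hs_pos : 0 < s := Real.sqrt_pos.2 (by positivity)
  have hs_sq : s ^ 2 = 2 * r := Real.sq_sqrt (by positivity)
  have hf_pos : 0 < f x_R :=
    add_pos (sinh_pos_iff.2 (mul_pos hxR.1 hs_pos))
      (sinh_pos_iff.2 (mul_pos (sub_pos.2 hxR.2) hs_pos))
  have hT_eq : T = fun x => (sinh (b * s) - f x) / (r * f x_R) := by
    funext x
    rw [hT, sub_sub]
  have hT'' : deriv (deriv T) = fun x => -(2 * r * f x) / (r * f x_R) := by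
    rw [hT_eq, deriv_deriv_const_sub_div, deriv_deriv_sinh_mul_add_sinh_sub_mul, hs_sq]
  refine ⟨fun x _ => ?_, ?_, ?_⟩
  · rw [hT'', hT_eq]
    field_simp
    ring
  · simp [hT_eq, f]
  · simp [hT_eq, f]

theorem stmt8 (b r x_R : ℝ) (hb : 0 < b) (hr : 0 < r) (hxR : x_R ∈ Set.Ioo 0 b)
    (T : ℝ → ℝ)
    (hT : ∀ x, T x =
      (Real.sinh (b * Real.sqrt (2 * r)) - Real.sinh (x * Real.sqrt (2 * r)) -
        Real.sinh ((b - x) * Real.sqrt (2 * r))) /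
      (r * (Real.sinh (x_R * Real.sqrt (2 * r)) + Real.sinh ((b - x_R) * Real.sqrt (2 * r))))) :
    (∀ x ∈ Set.Ioo 0 b,
      (1 / 2) * deriv (deriv T) x - r * T x + r * T x_R = -1) ∧
    T 0 = 0 ∧ T b = 0 :=
  stmt8_general b r x_R hr hxR T hT
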